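/- Let Λ be a commutative ring, let R = Λ[x_1, …, x_m] be the polynomial ring graded by total degree (so deg x_i = 1), and let M be an R-module equipped with a ℤ-grading, i.e., an internal direct sum decomposition M = ⊕_{d ∈ ℤ} M_d into Λ-submodules such that R_e · M_d ⊆ M_{d+e} for all e ≥ 0 and d ∈ ℤ. Assume that the underlying Λ-module of M is finitely generated. Then: (i) M_d = 0 for all but finitely many d ∈ ℤ; (ii) if M ≠ 0 and D is the largest integer with M_D ≠ 0, then M_D is a graded R-submodule of M annihilated by the ideal (x_1, …, x_m), so the R-action on M_D factors through the augmentation R → Λ; and (iii) M admits a finite chain of graded R-submodules 0 = M^0 ⊆ M^1 ⊆ … ⊆ M^k = M such that each successive quotient M^{t+1}/M^t is annihilated by the ideal (x_1, …, x_m). -/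

import Mathlib

/-!
Multiplication by a homogeneous polynomial of degree `e` shifts degrees up by `e`. Since `M` is
finitely generated over `Λ`, only finitely many `ℳ d` are nonzero, so the top nonzero degree is
killed by every polynomial without constant term. The filtration by the submodules of elements
with no components below degree `c` is graded and `R`-stable, each variable `x_i` maps its
`c`-th step into its `(c + 1)`-st, and it is exhausted after finitely many steps.
-/

open DirectSum MvPolynomial

theorem DirectSum.Decomposition.finite_setOf_ne_bot {ι R M : Type*} [DecidableEq ι] [Semiring R]
    [AddCommMonoid M] [Module R M] (ℳ : ι → Submodule R M) [Decomposition ℳ]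
    [Module.Finite R M] : {i | ℳ i ≠ ⊥}.Finite := by
  classical
  obtain ⟨S, hS⟩ := Module.Finite.fg_top (R := R) (M := M)
  set T := S.sup fun s => (decompose ℳ s).support
  have support_subset (x : M) : (decompose ℳ x).support ⊆ T := by
    have hx : x ∈ Submodule.span R (S : Set M) := hS ▸ Submodule.mem_top
    induction hx using Submodule.span_induction with
    | mem s hs => exact Finset.le_sup (f := fun s => (decompose ℳ s).support) hs
    | zero => simp
    | add a b _ _ ha hb =>
      rw [decompose_add]
      exact DFinsupp.support_add.trans (Finset.union_subset ha hb)
    | smul c a _ ha =>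
      rw [decompose_smul]
      exact (DFinsupp.support_smul _ _).trans ha
  refine T.finite_toSet.subset fun i hi => ?_
  obtain ⟨x, hx, hx0⟩ := Submodule.exists_mem_ne_zero_of_ne_bot hi
  refine support_subset x (DFinsupp.mem_support_iff.mpr fun h => hx0 ?_)
  rw [← decompose_of_mem_same ℳ hx, h, ZeroMemClass.coe_zero]

theorem DirectSum.coe_decompose_eq_zero_of_eq_bot {ι R M : Type*} [DecidableEq ι] [Semiring R]
    [AddCommMonoid M] [Module R M] {ℳ : ι → Submodule R M} [Decomposition ℳ] {i : ι}
    (h : ℳ i = ⊥) (x : M) : (decompose ℳ x i : M) = 0 :=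
  (Submodule.eq_bot_iff _).mp h _ (decompose ℳ x i).2

theorem Set.Finite.exists_subset_Ico_int {s : Set ℤ} (hs : s.Finite) :
    ∃ a b : ℤ, a ≤ b ∧ s ⊆ Set.Ico a b := by
  obtain ⟨a, ha⟩ := hs.bddBelow
  obtain ⟨b, hb⟩ := hs.bddAbove
  refine ⟨a, max a (b + 1), le_max_left _ _, fun d hd => ⟨ha hd, ?_⟩⟩
  have := hb hd
  omega

section PolynomialGrading

variable {Λ σ M : Type*} [CommSemiring Λ] [AddCommMonoid M] [Module (MvPolynomial σ Λ) M]
  [Module Λ M] {ℳ : ℤ → Submodule Λ M}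

variable (σ ℳ) in
def IsDegreeCompatible : Prop :=
  ∀ (e : ℕ) (r : MvPolynomial σ Λ), r ∈ homogeneousSubmodule σ Λ e →
    ∀ (d : ℤ) (x : M), x ∈ ℳ d → r • x ∈ ℳ (d + e)

theorem IsDegreeCompatible.smul_eq_constantCoeff_smul [IsScalarTower Λ (MvPolynomial σ Λ) M]
    (hℳ : IsDegreeCompatible σ ℳ) {D : ℤ} (htop : ∀ d, D < d → ℳ d = ⊥) {x : M} (hx : x ∈ ℳ D)
    (r : MvPolynomial σ Λ) : r • x = constantCoeff r • x := by
  conv_lhs => rw [← sum_homogeneousComponent r]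
  rw [Finset.sum_smul, Finset.sum_eq_single 0]
  · rw [homogeneousComponent_zero, ← algebraMap_eq, algebraMap_smul]
    rfl
  · intro e _ he
    have hmem := hℳ e _ (homogeneousComponent_mem e r) D x hx
    rwa [htop (D + e) (by omega), Submodule.mem_bot] at hmem
  · simp

variable [Decomposition ℳ]

theorem IsDegreeCompatible.decompose_smul_apply (hℳ : IsDegreeCompatible σ ℳ) {e : ℕ}
    {r : MvPolynomial σ Λ} (hr : r ∈ homogeneousSubmodule σ Λ e) (x : M) (d : ℤ) :
    (decompose ℳ (r • x) d : M) = r • (decompose ℳ x (d - e) : M) := by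
  induction x using Decomposition.inductionOn ℳ generalizing d with
  | zero => simp
  | add a b ha hb =>
    rw [smul_add, decompose_add, DirectSum.add_apply, Submodule.coe_add, ha, hb, decompose_add,
      DirectSum.add_apply, Submodule.coe_add, smul_add]
  | @homogeneous i y =>
    have hry : r • (y : M) ∈ ℳ (i + e) := hℳ e r hr i y y.2
    by_cases h : d = i + e
    · subst h
      rw [decompose_of_mem_same ℳ hry, add_sub_cancel_right, decompose_of_mem_same ℳ y.2]
    · rw [decompose_of_mem_ne ℳ hry (Ne.symm h), decompose_of_mem_ne ℳ y.2 (by omega),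
        smul_zero]

namespace IsDegreeCompatible

variable (hℳ : IsDegreeCompatible σ ℳ)

def tailSubmodule (c : ℤ) : Submodule (MvPolynomial σ Λ) M where
  carrier := {x | ∀ d < c, (decompose ℳ x d : M) = 0}
  zero_mem' := by simp
  add_mem' {a b} ha hb d hd := by
    rw [decompose_add, DirectSum.add_apply, Submodule.coe_add, ha d hd, hb d hd, add_zero]
  smul_mem' r x hx d hd := by
    conv_lhs => rw [← sum_homogeneousComponent r]
    rw [Finset.sum_smul, decompose_sum, DFinsupp.finsetSum_apply, Submodule.coe_sum]
    refine Finset.sum_eq_zero fun e _ => ?_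
    rw [hℳ.decompose_smul_apply (homogeneousComponent_mem e r), hx _ (by omega), smul_zero]

theorem tailSubmodule_antitone : Antitone hℳ.tailSubmodule :=
  fun _ _ hcc' _ hx d hd => hx d (hd.trans_le hcc')

theorem tailSubmodule_eq_top {c : ℤ} (h : ∀ d < c, ℳ d = ⊥) : hℳ.tailSubmodule c = ⊤ :=
  eq_top_iff.mpr fun x _ d hd => coe_decompose_eq_zero_of_eq_bot (h d hd) x

theorem tailSubmodule_eq_bot {c : ℤ} (h : ∀ d, c ≤ d → ℳ d = ⊥) : hℳ.tailSubmodule c = ⊥ := by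
  classical
  refine eq_bot_iff.mpr fun x hx => ?_
  rw [Submodule.mem_bot, ← sum_support_decompose ℳ x]
  refine Finset.sum_eq_zero fun d _ => ?_
  rcases lt_or_ge d c with hd | hd
  · exact hx d hd
  · exact coe_decompose_eq_zero_of_eq_bot (h d hd) x

theorem decompose_mem_tailSubmodule {c : ℤ} {x : M} (hx : x ∈ hℳ.tailSubmodule c) (d : ℤ) :
    (decompose ℳ x d : M) ∈ hℳ.tailSubmodule c := by
  intro d' hd'
  by_cases h : d' = d
  · subst h
    rw [decompose_of_mem_same ℳ (decompose ℳ x d').2]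
    exact hx d' hd'
  · exact decompose_of_mem_ne ℳ (decompose ℳ x d).2 (Ne.symm h)

theorem smul_mem_tailSubmodule_add {e : ℕ} {r : MvPolynomial σ Λ}
    (hr : r ∈ homogeneousSubmodule σ Λ e) {c : ℤ} {x : M} (hx : x ∈ hℳ.tailSubmodule c) :
    r • x ∈ hℳ.tailSubmodule (c + e) := by
  intro d hd
  rw [hℳ.decompose_smul_apply hr, hx _ (by omega), smul_zero]

end IsDegreeCompatible

end PolynomialGrading

theorem graded_module_over_polynomial_ring_filtration
    (Λ : Type*) [CommRing Λ] (m : ℕ) (M : Type*) [AddCommGroup M]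
    [Module (MvPolynomial (Fin m) Λ) M] [Module Λ M]
    [IsScalarTower Λ (MvPolynomial (Fin m) Λ) M]
    (ℳ : ℤ → Submodule Λ M) [DirectSum.Decomposition ℳ]
    (hcompat : ∀ (e : ℕ) (r : MvPolynomial (Fin m) Λ),
      r ∈ MvPolynomial.homogeneousSubmodule (Fin m) Λ e →
      ∀ (d : ℤ) (x : M), x ∈ ℳ d → r • x ∈ ℳ (d + e))
    [Module.Finite Λ M] :
    -- (i)
    {d : ℤ | ℳ d ≠ ⊥}.Finite ∧
    -- (ii)
    (∀ D : ℤ, Nontrivial M → ℳ D ≠ ⊥ → (∀ d : ℤ, D < d → ℳ d = ⊥) →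
      (∀ x ∈ ℳ D, ∀ r : MvPolynomial (Fin m) Λ, r • x ∈ ℳ D) ∧
      (∀ x ∈ ℳ D, ∀ i : Fin m, (MvPolynomial.X i : MvPolynomial (Fin m) Λ) • x = 0) ∧
      (∀ x ∈ ℳ D, ∀ r : MvPolynomial (Fin m) Λ,
        r • x = MvPolynomial.constantCoeff r • x)) ∧
    -- (iii)
    (∃ (k : ℕ) (chain : Fin (k + 1) → Submodule (MvPolynomial (Fin m) Λ) M),
      Monotone chain ∧
      chain 0 = ⊥ ∧
      chain (Fin.last k) = ⊤ ∧
      (∀ (t : Fin (k + 1)) (d : ℤ) (x : M),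
        x ∈ chain t → ((DirectSum.decompose ℳ x) d : M) ∈ chain t) ∧
      (∀ (t : Fin k) (i : Fin m) (x : M), x ∈ chain t.succ →
        (MvPolynomial.X i : MvPolynomial (Fin m) Λ) • x ∈ chain t.castSucc)) := by
  have hℳ : IsDegreeCompatible (Fin m) ℳ := hcompat
  have hfin := Decomposition.finite_setOf_ne_bot ℳ
  obtain ⟨a, b, hab, hsub⟩ := hfin.exists_subset_Ico_int
  have hvanish (d : ℤ) (hd : d ∉ Set.Ico a b) : ℳ d = ⊥ := by_contra fun h => hd (hsub h)
  refine ⟨hfin, fun D _ _ htop => ?_, ?_⟩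
  · have hconst := fun x (hx : x ∈ ℳ D) => hℳ.smul_eq_constantCoeff_smul htop hx
    refine ⟨fun x hx r => ?_, fun x hx i => ?_, hconst⟩
    · rw [hconst x hx]
      exact Submodule.smul_mem _ _ hx
    · rw [hconst x hx, constantCoeff_X, zero_smul]
  · obtain ⟨k, hk⟩ : ∃ k : ℕ, (k : ℤ) = b - a := ⟨(b - a).toNat, Int.toNat_of_nonneg (by omega)⟩
    refine ⟨k, fun t => hℳ.tailSubmodule (b - t), fun t u htu => ?_, ?_, ?_,
      fun t d x hx => hℳ.decompose_mem_tailSubmodule hx d, fun t i x hx => ?_⟩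
    · exact hℳ.tailSubmodule_antitone (by simp only [Fin.le_def] at htu; omega)
    · exact hℳ.tailSubmodule_eq_bot fun d hd => hvanish d (by simp at hd ⊢; omega)
    · exact hℳ.tailSubmodule_eq_top fun d hd => hvanish d (by simp at hd ⊢; omega)
    · have := hℳ.smul_mem_tailSubmodule_add (isHomogeneous_X Λ i) hx
      convert this using 2
      simp only [Fin.val_castSucc, Fin.val_succ, Nat.cast_add, Nat.cast_one]
      ring
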